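/- Let Ω ⊆ ℝⁿ be an open set, u : Ω → ℝ a bounded continuous function, ε > 0, and x ∈ Ω a point such that the closed ball of radius ρ(ε) := 2√(ε·sup_Ω |u|) centered at x is contained in Ω. Suppose the sup-convolution u^ε is (Fréchet) differentiable at x, and let y ∈ Ω be any point at which the supremum defining u^ε(x) is attained, i.e. u^ε(x) = u(y) − |x − y|²/(2ε). Then y = x + ε∇u^ε(x) (in particular the maximizer is unique) and ∇u^ε(x) belongs to the superdifferential D⁺u(y). -/

import Mathlib

open Set Metric

/-- The sup-convolution `u^ε` of a function `u : Ω → ℝ`. -/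
noncomputable def supConv {n : ℕ} (ε : ℝ) (Ω : Set (EuclideanSpace ℝ (Fin n)))
    (u : EuclideanSpace ℝ (Fin n) → ℝ) (x : EuclideanSpace ℝ (Fin n)) : ℝ :=
  sSup ((fun y => u y - ‖x - y‖ ^ 2 / (2 * ε)) '' Ω)

/-- The radius `ρ(ε) = 2 √(ε ⬝ sup_Ω |u|)`. -/
noncomputable def rho {n : ℕ} (ε : ℝ) (Ω : Set (EuclideanSpace ℝ (Fin n)))
    (u : EuclideanSpace ℝ (Fin n) → ℝ) : ℝ :=
  2 * Real.sqrt (ε * sSup ((fun y => |u y|) '' Ω))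

/-- The superdifferential `D⁺u(y)`: the set of `p` such that
`limsup_{z → y} (u z - u y - ⟨p, z - y⟩)/‖z - y‖ ≤ 0`. -/
def superdiff {n : ℕ} (u : EuclideanSpace ℝ (Fin n) → ℝ)
    (y : EuclideanSpace ℝ (Fin n)) : Set (EuclideanSpace ℝ (Fin n)) :=
  {p | ∀ c : ℝ, 0 < c → ∀ᶠ z in nhds y,
    u z - u y - (inner ℝ p (z - y) : ℝ) ≤ c * ‖z - y‖}

/-
If `u^ε(x)` is attained at `y`, the paraboloid `z ↦ u(y) - ‖z - y‖²/(2ε)` touches `u^ε` from below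
at `x`, so where `u^ε` is differentiable the two gradients agree: `∇u^ε(x) = (y - x)/ε`. Translating
the competitor `y` by `z - y` gives `u(z) - u(y) ≤ u^ε(x + (z - y)) - u^ε(x)` for `z ∈ Ω`, and the
first-order expansion of `u^ε` at `x` turns this into `∇u^ε(x) ∈ D⁺u(y)`.
-/

open Filter Topology InnerProductSpace

section Gradient

variable {E : Type*} [NormedAddCommGroup E] [InnerProductSpace ℝ E] [CompleteSpace E]

theorem HasGradientAt.eq_of_eventually_le_of_eq {f g : E → ℝ} {p q x : E}
    (hf : HasGradientAt f p x) (hg : HasGradientAt g q x)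
    (hle : ∀ᶠ z in 𝓝 x, g z ≤ f z) (heq : f x = g x) : p = q := by
  have hmin : IsLocalMin (fun z => f z - g z) x := by
    filter_upwards [hle] with z hz
    rw [heq, sub_self]
    exact sub_nonneg.2 hz
  have hzero := hmin.hasFDerivAt_eq_zero (hf.hasFDerivAt.sub hg.hasFDerivAt)
  exact (toDual ℝ E).injective (sub_eq_zero.1 hzero)

theorem hasGradientAt_const_sub_norm_sub_sq_div (c ε : ℝ) (x y : E) :
    HasGradientAt (fun z => c - ‖z - y‖ ^ 2 / (2 * ε)) (ε⁻¹ • (y - x)) x := by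
  have hsq : HasFDerivAt (fun z => ‖z - y‖ ^ 2)
      (2 • (innerSL ℝ (x - y)).comp (ContinuousLinearMap.id ℝ E)) x :=
    ((hasFDerivAt_id x).sub_const y).norm_sq
  rw [hasGradientAt_iff_hasFDerivAt]
  simp_rw [div_eq_mul_inv]
  refine ((hsq.mul_const (2 * ε)⁻¹).const_sub c).congr_fderiv ?_
  ext w
  simp only [neg_apply, smul_apply,
    ContinuousLinearMap.comp_apply, ContinuousLinearMap.id_apply, innerSL_apply_apply,
    toDual_apply_apply, inner_sub_left, real_inner_smul_left, smul_eq_mul, nsmul_eq_mul]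
  ring

end Gradient

section SupConv

variable {n : ℕ} {Ω : Set (EuclideanSpace ℝ (Fin n))} {u : EuclideanSpace ℝ (Fin n) → ℝ} {ε : ℝ}

theorem le_supConv (hε : 0 ≤ ε) (hu : BddAbove (u '' Ω)) {z : EuclideanSpace ℝ (Fin n)}
    (hz : z ∈ Ω) (w : EuclideanSpace ℝ (Fin n)) :
    u z - ‖w - z‖ ^ 2 / (2 * ε) ≤ supConv ε Ω u w := by
  refine le_csSup ?_ (mem_image_of_mem _ hz)
  obtain ⟨M, hM⟩ := hu
  refine ⟨M, ?_⟩
  rintro _ ⟨z', hz', rfl⟩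
  have hpen : 0 ≤ ‖w - z'‖ ^ 2 / (2 * ε) := by positivity
  linarith [hM (mem_image_of_mem u hz')]

theorem sub_le_supConv_add_sub_sub (hε : 0 ≤ ε) (hu : BddAbove (u '' Ω))
    {x y z : EuclideanSpace ℝ (Fin n)} (hmax : supConv ε Ω u x = u y - ‖x - y‖ ^ 2 / (2 * ε))
    (hz : z ∈ Ω) : u z - u y ≤ supConv ε Ω u (x + (z - y)) - supConv ε Ω u x := by
  have h := le_supConv hε hu hz (x + (z - y))
  rw [show x + (z - y) - z = x - y by abel] at h
  linarith

end SupConv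

theorem mem_superdiff_of_hasGradientAt {n : ℕ} {u v : EuclideanSpace ℝ (Fin n) → ℝ}
    {p x y : EuclideanSpace ℝ (Fin n)} (hv : HasGradientAt v p x)
    (hle : ∀ᶠ z in 𝓝 y, u z - u y ≤ v (x + (z - y)) - v x) : p ∈ superdiff u y := by
  intro c hc
  have hsmall := (hasGradientAt_iff_isLittleO_nhds_zero.1 hv).def hc
  have hto : Tendsto (fun z => z - y) (𝓝 y) (𝓝 0) := tendsto_sub_nhds_zero_iff.2 tendsto_id
  filter_upwards [hle, hto.eventually hsmall] with z hz hzsmall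
  rw [Real.norm_eq_abs] at hzsmall
  linarith [le_abs_self (v (x + (z - y)) - v x - inner ℝ p (z - y))]

theorem supConv_magic_property_general
    {n : ℕ} (Ω : Set (EuclideanSpace ℝ (Fin n))) (hΩopen : IsOpen Ω)
    (u : EuclideanSpace ℝ (Fin n) → ℝ)
    (hubdd : ∃ M : ℝ, ∀ y ∈ Ω, |u y| ≤ M)
    (ε : ℝ) (hε : 0 < ε)
    (x : EuclideanSpace ℝ (Fin n))
    (hdiff : DifferentiableAt ℝ (supConv ε Ω u) x)
    (y : EuclideanSpace ℝ (Fin n)) (hy : y ∈ Ω)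
    (hmax : supConv ε Ω u x = u y - ‖x - y‖ ^ 2 / (2 * ε)) :
    y = x + ε • gradient (supConv ε Ω u) x ∧
    gradient (supConv ε Ω u) x ∈ superdiff u y := by
  obtain ⟨M, hM⟩ := hubdd
  have hbdd : BddAbove (u '' Ω) := ⟨M, by rintro _ ⟨z, hz, rfl⟩; exact (abs_le.1 (hM z hz)).2⟩
  have hgrad := hdiff.hasGradientAt
  have hgrad_eq : gradient (supConv ε Ω u) x = ε⁻¹ • (y - x) :=
    hgrad.eq_of_eventually_le_of_eq (hasGradientAt_const_sub_norm_sub_sq_div (u y) ε x y)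
      (Eventually.of_forall (le_supConv hε.le hbdd hy)) hmax
  refine ⟨?_, mem_superdiff_of_hasGradientAt hgrad ?_⟩
  · rw [hgrad_eq, smul_smul, mul_inv_cancel₀ hε.ne', one_smul, add_sub_cancel]
  · filter_upwards [hΩopen.eventually_mem hy] with z hz
    exact sub_le_supConv_add_sub_sub hε.le hbdd hmax hz

theorem supConv_magic_property
    {n : ℕ} (Ω : Set (EuclideanSpace ℝ (Fin n))) (hΩopen : IsOpen Ω)
    (u : EuclideanSpace ℝ (Fin n) → ℝ)
    (hu : ContinuousOn u Ω) (hubdd : ∃ M : ℝ, ∀ y ∈ Ω, |u y| ≤ M)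
    (ε : ℝ) (hε : 0 < ε)
    (x : EuclideanSpace ℝ (Fin n))
    (hx : Metric.closedBall x (rho ε Ω u) ⊆ Ω)
    (hdiff : DifferentiableAt ℝ (supConv ε Ω u) x)
    (y : EuclideanSpace ℝ (Fin n)) (hy : y ∈ Ω)
    (hmax : supConv ε Ω u x = u y - ‖x - y‖ ^ 2 / (2 * ε)) :
    y = x + ε • gradient (supConv ε Ω u) x ∧
    gradient (supConv ε Ω u) x ∈ superdiff u y :=
  supConv_magic_property_general Ω hΩopen u hubdd ε hε x hdiff y hy hmax
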